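/- Let N be a binary tree-child network and ℓ a leaf of type T with TH-path of length r. If N has h hybrid nodes then its reduction T(N, ℓ) has h - (r - 1) hybrid nodes; if ℓ is of type H, the reduction H(N, ℓ) has h - r hybrid nodes. -/

import Mathlib

/-- In-degree of a node in a directed graph given by its arc relation. -/
noncomputable def indeg {V : Type} (A : V → V → Prop) (v : V) : ℕ := Nat.card {u : V // A u v}

/-- Out-degree of a node in a directed graph given by its arc relation. -/
noncomputable def outdeg {V : Type} (A : V → V → Prop) (v : V) : ℕ := Nat.card {u : V // A v u}

/-- A leaf: degrees (1,0). -/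
def IsLeaf {V : Type} (A : V → V → Prop) (v : V) : Prop :=
  indeg A v = 1 ∧ outdeg A v = 0

/-- A tree node: degrees (1,0) (leaf), (0,2) (root) or (1,2) (internal tree node). -/
def IsTreeNode {V : Type} (A : V → V → Prop) (v : V) : Prop :=
  (indeg A v = 1 ∧ outdeg A v = 0) ∨ (indeg A v = 0 ∧ outdeg A v = 2) ∨
    (indeg A v = 1 ∧ outdeg A v = 2)

/-- A hybrid node: degrees (2,1). -/
def IsHybrid {V : Type} (A : V → V → Prop) (v : V) : Prop :=
  indeg A v = 2 ∧ outdeg A v = 1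

/-- A binary tree-child phylogenetic network on the (finite) node set `V`:
a DAG with a single root, all of whose nodes are tree nodes or hybrid nodes,
and where every non-leaf node has a child that is a tree node. -/
structure BTC (V : Type) [Finite V] where
  Arc : V → V → Prop
  acyclic : ∀ v : V, ¬ Relation.TransGen Arc v v
  uniqueRoot : ∃! r : V, indeg Arc r = 0
  binary : ∀ v : V, IsTreeNode Arc v ∨ IsHybrid Arc v
  treeChild : ∀ v : V, 0 < outdeg Arc v → ∃ w : V, Arc v w ∧ IsTreeNode Arc w 
/-- A pre-TH-path for a leaf ℓ: a directed path u_1,…,u_r = ℓ of tree nodes such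
that for each i < r the child of u_i other than u_{i+1} is a hybrid node, and
these hybrid children are pairwise distinct. -/
def IsPreTHPath {V : Type} (A : V → V → Prop) (ℓ : V) (p : List V) : Prop :=
  p ≠ [] ∧ p.getLast? = some ℓ ∧
  p.Chain' (fun a b => A a b) ∧
  (∀ u ∈ p, IsTreeNode A u) ∧
  (∀ i, (hi : i + 1 < p.length) →
    ∀ v : V, A (p[i]'(by omega)) v → v ≠ p[i+1]'hi → IsHybrid A v) ∧
  (∀ i j, (hi : i + 1 < p.length) → (hj : j + 1 < p.length) → i ≠ j →
    ∀ v w : V, A (p[i]'(by omega)) v → v ≠ p[i+1]'hi →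
      A (p[j]'(by omega)) w → w ≠ p[j+1]'hj → v ≠ w)

/-- A TH-path: a maximal pre-TH-path (it cannot be extended by prepending). -/
def IsTHPath {V : Type} (A : V → V → Prop) (ℓ : V) (p : List V) : Prop :=
  IsPreTHPath A ℓ p ∧ ∀ u : V, ¬ IsPreTHPath A ℓ (u :: p)

/-- The node set of the extended TH-path of ℓ (the TH-path p with first node
u1, together with the parent of u1 when that parent is hybrid). -/
def ExtDel {V : Type} (A : V → V → Prop) (u1 : V) (p : List V) : V → Prop :=
  fun v => v ∈ p ∨ (A v u1 ∧ IsHybrid A v)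

/-- The arcs of the subgraph induced by deleting the nodes satisfying D. -/
def SubArc {V : Type} (A : V → V → Prop) (D : V → Prop) : V → V → Prop :=
  fun a b => A a b ∧ ¬ D a ∧ ¬ D b

/-- An elementary node after deletion: a surviving node of degrees (1,1) or
(0,1) in the induced subgraph. -/
def Elem {V : Type} (A : V → V → Prop) (D : V → Prop) (v : V) : Prop :=
  ¬ D v ∧ outdeg (SubArc A D) v = 1 ∧ indeg (SubArc A D) v ≤ 1

/-- The nodes kept by the reduction: neither deleted nor elementary. -/
def Keep {V : Type} (A : V → V → Prop) (D : V → Prop) (v : V) : Prop :=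
  ¬ D v ∧ ¬ Elem A D v

/-- The arcs of the reduced network: a → b when there is a path from a to b in
the induced subgraph all of whose intermediate nodes are elementary (i.e. all
elementary nodes are suppressed). -/
def RedArc {V : Type} (A : V → V → Prop) (D : V → Prop)
    (a b : {v : V // Keep A D v}) : Prop :=
  ∃ c : V, Relation.ReflTransGen (fun x y => SubArc A D x y ∧ Elem A D y) a.1 c ∧
    SubArc A D c b.1
set_option linter.unusedSectionVars false
section CardUtil
open Classical
variable {α : Type} [Finite α]

lemma card_zero_iff {P : α → Prop} : Nat.card {x : α // P x} = 0 ↔ ∀ x, ¬ P x := by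
  rw [Nat.card_eq_zero]
  constructor
  · rintro (he | hi) x hx
    · exact he.elim ⟨x, hx⟩
    · exact (@not_finite _ hi inferInstance).elim
  · intro h
    exact Or.inl ⟨fun x => h x.1 x.2⟩

lemma card_le_one_eq {P : α → Prop} (h : Nat.card {x : α // P x} ≤ 1)
    {a b : α} (ha : P a) (hb : P b) : a = b := by
  have : Subsingleton {x : α // P x} := by
    rcases Nat.le_one_iff_eq_zero_or_eq_one.mp h with h0 | h1
    · exact (card_zero_iff.mp h0 a ha).elim
    · exact (Nat.card_eq_one_iff_unique.mp h1).1
  exact congrArg Subtype.val (this.elim ⟨a, ha⟩ ⟨b, hb⟩)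

lemma card_one_eq {P : α → Prop} (h : Nat.card {x : α // P x} = 1)
    {a b : α} (ha : P a) (hb : P b) : a = b := card_le_one_eq h.le ha hb

lemma card_pos_of {P : α → Prop} {a : α} (ha : P a) : 0 < Nat.card {x : α // P x} := by
  rcases Nat.eq_zero_or_pos (Nat.card {x : α // P x}) with h0 | h
  · exact (card_zero_iff.mp h0 a ha).elim
  · exact h

lemma card_one_exists {P : α → Prop} (h : Nat.card {x : α // P x} = 1) :
    ∃ a, P a := by
  obtain ⟨-, ⟨a⟩⟩ := Nat.card_eq_one_iff_unique.mp h
  exact ⟨a.1, a.2⟩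

/-- If a subtype has exactly two elements and `a` is one of them, there is the other. -/
lemma card_two_other {P : α → Prop} (h : Nat.card {x : α // P x} = 2) {a : α} (ha : P a) :
    ∃ b, P b ∧ b ≠ a ∧ ∀ c, P c → c = a ∨ c = b := by
  obtain ⟨x, y, hxy, hset⟩ := Nat.card_eq_two_iff.mp h
  have hall : ∀ c : {x : α // P x}, c = x ∨ c = y := by
    intro c
    have : c ∈ ({x, y} : Set {x : α // P x}) := hset ▸ Set.mem_univ c
    simpa using this
  rcases hall ⟨a, ha⟩ with h1 | h1
  · refine ⟨y.1, y.2, ?_, ?_⟩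
    · intro he; apply hxy; rw [← h1]; exact Subtype.ext he.symm
    · intro c hc; rcases hall ⟨c, hc⟩ with h2 | h2
      · left; rw [← h1] at h2; exact congrArg Subtype.val h2
      · right; exact congrArg Subtype.val h2
  · refine ⟨x.1, x.2, ?_, ?_⟩
    · intro he; apply hxy; rw [← h1]; exact Subtype.ext he
    · intro c hc; rcases hall ⟨c, hc⟩ with h2 | h2
      · right; exact congrArg Subtype.val h2
      · left; rw [← h1] at h2; exact congrArg Subtype.val h2

lemma card_two_pair {P : α → Prop} (h : Nat.card {x : α // P x} = 2) :
    ∃ a b, a ≠ b ∧ P a ∧ P b ∧ ∀ c, P c → c = a ∨ c = b := by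
  obtain ⟨x, y, hxy, hset⟩ := Nat.card_eq_two_iff.mp h
  refine ⟨x.1, y.1, fun he => hxy (Subtype.ext he), x.2, y.2, ?_⟩
  intro c hc
  have : (⟨c, hc⟩ : {x : α // P x}) ∈ ({x, y} : Set {x : α // P x}) := hset ▸ Set.mem_univ _
  rcases this with h2 | h2
  · left; exact congrArg Subtype.val h2
  · right; exact congrArg Subtype.val h2

/-- Partition of a subtype count by a second predicate. -/
lemma card_partition (P Q : α → Prop) :
    Nat.card {x : α // P x} =
      Nat.card {x : α // P x ∧ Q x} + Nat.card {x : α // P x ∧ ¬ Q x} := by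
  rw [← Nat.card_sum]
  apply Nat.card_congr
  refine ⟨fun x => if h : Q x.1 then Sum.inl ⟨x.1, x.2, h⟩ else Sum.inr ⟨x.1, x.2, h⟩,
    fun s => s.elim (fun x => ⟨x.1, x.2.1⟩) (fun x => ⟨x.1, x.2.1⟩), ?_, ?_⟩
  · intro x; by_cases h : Q x.1 <;> simp [h]
  · rintro (x | x)
    · simp [x.2.2]
    · simp [x.2.2]

end CardUtil
section BTCBasic
open Classical Relation
variable {V : Type} [Finite V] (M : BTC V)

lemma btc_wf_down : WellFounded (Relation.TransGen M.Arc) := by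
  have : IsTrans V (Relation.TransGen M.Arc) := ⟨fun _ _ _ => TransGen.trans⟩
  have : IsIrrefl V (Relation.TransGen M.Arc) := ⟨fun v => M.acyclic v⟩
  exact Finite.wellFounded_of_trans_of_irrefl _

lemma btc_wf_up : WellFounded (fun a b : V => Relation.TransGen M.Arc b a) := by
  have : IsTrans V (fun a b : V => Relation.TransGen M.Arc b a) :=
    ⟨fun _ _ _ h1 h2 => TransGen.trans h2 h1⟩
  have : IsIrrefl V (fun a b : V => Relation.TransGen M.Arc b a) := ⟨fun v => M.acyclic v⟩
  exact Finite.wellFounded_of_trans_of_irrefl _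

lemma btc_ne {x y : V} (h : M.Arc x y) : x ≠ y := by
  intro he; subst he; exact M.acyclic x (TransGen.single h)

lemma not_tree_hybrid {v : V} (ht : IsTreeNode M.Arc v) (hh : IsHybrid M.Arc v) : False := by
  have h2 := hh.1; have h3 := hh.2
  rcases ht with ⟨h1, h1'⟩ | ⟨h1, h1'⟩ | ⟨h1, h1'⟩ <;> omega

lemma tree_indeg_le_one {v : V} (ht : IsTreeNode M.Arc v) : indeg M.Arc v ≤ 1 := by
  rcases ht with ⟨h1, _⟩ | ⟨h1, _⟩ | ⟨h1, _⟩ <;> omega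

lemma tree_parent_unique {v x y : V} (ht : IsTreeNode M.Arc v)
    (hx : M.Arc x v) (hy : M.Arc y v) : x = y :=
  card_le_one_eq (tree_indeg_le_one M ht) hx hy

lemma tree_outdeg_two {v y : V} (ht : IsTreeNode M.Arc v) (hy : M.Arc v y) :
    outdeg M.Arc v = 2 := by
  rcases ht with ⟨_, h2⟩ | ⟨_, h2⟩ | ⟨_, h2⟩ <;> try exact h2
  exact absurd hy (card_zero_iff.mp h2 y)

/-- For a node of outdegree two with child y, there is exactly one other child. -/
lemma other_child {v y : V} (h2 : outdeg M.Arc v = 2) (hy : M.Arc v y) :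
    ∃ z, M.Arc v z ∧ z ≠ y ∧ ∀ t, M.Arc v t → t = y ∨ t = z := by
  obtain ⟨z, hz, hzy, hall⟩ := card_two_other (h2 : Nat.card {t : V // M.Arc v t} = 2) hy
  exact ⟨z, hz, hzy, fun t ht => hall t ht⟩

lemma hybrid_child_unique {v y z : V} (hh : IsHybrid M.Arc v)
    (hy : M.Arc v y) (hz : M.Arc v z) : y = z :=
  card_le_one_eq (le_of_eq hh.2) hy hz

lemma hybrid_two_parents {v : V} (hh : IsHybrid M.Arc v) :
    ∃ a b, a ≠ b ∧ M.Arc a v ∧ M.Arc b v ∧ ∀ c, M.Arc c v → c = a ∨ c = b :=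
  card_two_pair hh.1

lemma hybrid_child_tree {v y : V} (hh : IsHybrid M.Arc v) (hy : M.Arc v y) :
    IsTreeNode M.Arc y := by
  obtain ⟨t, ht, htt⟩ := M.treeChild v (by rw [hh.2]; omega)
  rwa [hybrid_child_unique M hh hy ht]

lemma hybrid_of_two_parents {v a b : V} (hab : a ≠ b) (ha : M.Arc a v) (hb : M.Arc b v) :
    IsHybrid M.Arc v := by
  rcases M.binary v with ht | hh
  · exact absurd (tree_parent_unique M ht ha hb) hab
  · exact hh

/-- every node with a child of outdegree-2 tree type... helper: children of tree node with a child -/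
lemma tree_two_children {v y : V} (ht : IsTreeNode M.Arc v) (hy : M.Arc v y) :
    ∃ z, M.Arc v z ∧ z ≠ y ∧ ∀ t, M.Arc v t → t = y ∨ t = z :=
  other_child M (tree_outdeg_two M ht hy) hy

/-- Degree formula: #arcs + 1 = #nodes + #hybrid nodes. -/
lemma deg_formula :
    Nat.card {q : V × V // M.Arc q.1 q.2} + 1 =
      Nat.card V + Nat.card {v : V // IsHybrid M.Arc v} := by
  obtain ⟨rt, hrt, hrtu⟩ := M.uniqueRoot
  have : Fintype V := Fintype.ofFinite V
  -- E = ∑ indeg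
  have hE : Nat.card {q : V × V // M.Arc q.1 q.2} = ∑ v : V, indeg M.Arc v := by
    have he : {q : V × V // M.Arc q.1 q.2} ≃ Σ v : V, {u : V // M.Arc u v} :=
      ⟨fun q => ⟨q.1.2, q.1.1, q.2⟩, fun s => ⟨(s.2.1, s.1), s.2.2⟩,
        fun q => rfl, fun s => rfl⟩
    rw [Nat.card_congr he, Nat.card_eq_fintype_card, Fintype.card_sigma]
    unfold indeg
    congr 1
    funext v
    rw [Nat.card_eq_fintype_card]
  have hh' : Nat.card {v : V // IsHybrid M.Arc v} =
      (Finset.univ.filter (fun v => IsHybrid M.Arc v)).card := by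
    rw [Nat.card_eq_fintype_card, Fintype.card_subtype]
  have hrt_nothyb : ¬ IsHybrid M.Arc rt := fun h => by
    have := h.1; rw [hrt] at this; omega
  have hstep : ∀ v ∈ Finset.univ.erase rt,
      indeg M.Arc v = 1 + (if IsHybrid M.Arc v then 1 else 0) := by
    intro v hv
    have hvrt : v ≠ rt := (Finset.mem_erase.mp hv).1
    rcases M.binary v with htv | hhv
    · have hnh : ¬ IsHybrid M.Arc v := fun hx => not_tree_hybrid M htv hx
      rw [if_neg hnh]
      rcases htv with ⟨h1, _⟩ | ⟨h1, _⟩ | ⟨h1, _⟩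
      · omega
      · exact absurd (hrtu v h1) hvrt
      · omega
    · rw [if_pos hhv, hhv.1]
  have hsum : ∑ v : V, indeg M.Arc v
      = indeg M.Arc rt + ∑ v ∈ Finset.univ.erase rt, indeg M.Arc v := by
    rw [Finset.add_sum_erase _ _ (Finset.mem_univ rt)]
  have hsum2 : ∑ v ∈ Finset.univ.erase rt, indeg M.Arc v
      = ∑ v ∈ Finset.univ.erase rt, (1 + (if IsHybrid M.Arc v then 1 else 0)) :=
    Finset.sum_congr rfl hstep
  have hsum3 : ∑ v ∈ Finset.univ.erase rt, (1 + (if IsHybrid M.Arc v then 1 else 0))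
      = (Finset.univ.erase rt).card
        + ∑ v ∈ Finset.univ.erase rt, (if IsHybrid M.Arc v then 1 else 0) := by
    rw [Finset.sum_add_distrib, Finset.sum_const, smul_eq_mul, mul_one]
  have hsum4 : ∑ v ∈ Finset.univ.erase rt, (if IsHybrid M.Arc v then 1 else 0)
      = ∑ v : V, (if IsHybrid M.Arc v then 1 else 0) :=
    Finset.sum_erase _ (by rw [if_neg hrt_nothyb])
  have hsum5 : ∑ v : V, (if IsHybrid M.Arc v then (1:ℕ) else 0)
      = (Finset.univ.filter (fun v => IsHybrid M.Arc v)).card := by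
    rw [Finset.card_filter]
  have hcard : (Finset.univ.erase rt).card + 1 = Nat.card V := by
    rw [Finset.card_erase_of_mem (Finset.mem_univ rt), Nat.card_eq_fintype_card]
    have : 0 < Fintype.card V := Fintype.card_pos_iff.mpr ⟨rt⟩
    simp [Finset.card_univ]
    omega
  rw [hE, hh', hsum, hsum2, hsum3, hsum4, hsum5, hrt]
  omega

end BTCBasic
section Chains
open Classical Relation
variable {V : Type} [Finite V] (M : BTC V) (D : V → Prop)

/-- The step relation for suppressed chains. -/
abbrev EStep : V → V → Prop := fun x y => SubArc M.Arc D x y ∧ Elem M.Arc D y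

lemma keep_not_elem {v : V} (hk : Keep M.Arc D v) (he : Elem M.Arc D v) : False := hk.2 he

lemma elem_not_del {v : V} (he : Elem M.Arc D v) : ¬ D v := he.1

lemma notdel_split {v : V} (hv : ¬ D v) : Keep M.Arc D v ∨ Elem M.Arc D v := by
  by_cases he : Elem M.Arc D v
  · exact Or.inr he
  · exact Or.inl ⟨hv, he⟩

lemma elem_unique_child {v : V} (he : Elem M.Arc D v) :
    ∃ y, SubArc M.Arc D v y ∧ ∀ z, SubArc M.Arc D v z → z = y := by
  obtain ⟨y, hy⟩ := card_one_exists he.2.1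
  exact ⟨y, hy, fun z hz => card_one_eq he.2.1 hz hy⟩

lemma elem_parent_unique {v x y : V} (he : Elem M.Arc D v)
    (hx : SubArc M.Arc D x v) (hy : SubArc M.Arc D y v) : x = y :=
  card_le_one_eq he.2.2 hx hy

lemma chain_target_elem {x c : V} (hx : Elem M.Arc D x)
    (hc : ReflTransGen (EStep M D) x c) : Elem M.Arc D c := by
  induction hc with
  | refl => exact hx
  | tail _ h ih => exact h.2

/-- Existence: from any elementary node a chain leads to a kept node. -/
lemma chain_exists : ∀ x : V, Elem M.Arc D x →
    ∃ c b, ReflTransGen (EStep M D) x c ∧ SubArc M.Arc D c b ∧ Keep M.Arc D b := by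
  intro x
  induction x using (btc_wf_up M).induction with
  | _ x ih =>
    intro hx
    obtain ⟨y, hy, -⟩ := elem_unique_child M D hx
    rcases notdel_split M D hy.2.2 with hk | he
    · exact ⟨x, y, ReflTransGen.refl, hy, hk⟩
    · obtain ⟨c, b, hc, hcb, hb⟩ := ih y (TransGen.single hy.1) he
      exact ⟨c, b, ReflTransGen.head ⟨hy, he⟩ hc, hcb, hb⟩

/-- Determinism: the kept endpoint of a chain from an elementary node is unique. -/
lemma chain_unique : ∀ x : V, Elem M.Arc D x →
    ∀ c b c' b', ReflTransGen (EStep M D) x c → SubArc M.Arc D c b → Keep M.Arc D b →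
      ReflTransGen (EStep M D) x c' → SubArc M.Arc D c' b' → Keep M.Arc D b' → b = b' := by
  intro x
  induction x using (btc_wf_up M).induction with
  | _ x ih =>
    intro hx c b c' b' hc hcb hb hc' hcb' hb'
    obtain ⟨y, hy, hyu⟩ := elem_unique_child M D hx
    rcases hc.cases_head with rfl | ⟨z, hz, hzc⟩
    · rcases hc'.cases_head with rfl | ⟨z', hz', hzc'⟩
      · rw [hyu b hcb, hyu b' hcb']
      · have hby : b = y := hyu b hcb
        have hzy' : z' = y := hyu z' hz'.1
        exact absurd (hzy' ▸ hz'.2) (fun he => keep_not_elem M D (hby ▸ hb) he)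
    · rcases hc'.cases_head with rfl | ⟨z', hz', hzc'⟩
      · have hby : b' = y := hyu b' hcb'
        have hzy : z = y := hyu z hz.1
        exact absurd (hzy ▸ hz.2) (fun he => keep_not_elem M D (hby ▸ hb') he)
      · have hzy : z = y := hyu z hz.1
        have hzy' : z' = y := hyu z' hz'.1
        rw [hzy] at hzc
        rw [hzy'] at hzc'
        exact ih y (TransGen.single hy.1) (hzy ▸ hz.2) c b c' b' hzc hcb hb hzc' hcb' hb'

/-- Backward uniqueness: two elementary children of a kept node cannot have chains
meeting at the same node. -/
lemma chain_back_unique : ∀ c : V, ∀ a x x' : V, Keep M.Arc D a →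
    SubArc M.Arc D a x → SubArc M.Arc D a x' → Elem M.Arc D x → Elem M.Arc D x' →
    ReflTransGen (EStep M D) x c → ReflTransGen (EStep M D) x' c → x = x' := by
  intro c
  induction c using (btc_wf_down M).induction with
  | _ c ih =>
    intro a x x' ha hax hax' hx hx' hc hc'
    have hcelem : Elem M.Arc D c := chain_target_elem M D hx hc
    rcases hc.cases_tail with rfl | ⟨z, hz, hzc⟩
    · rcases hc'.cases_tail with rfl | ⟨z', hz', hzc'⟩
      · rfl
      · -- x = c, z' → c, a → c: so z' = a, but z' is elementary or x'
        have : z' = a := elem_parent_unique M D hcelem hzc'.1 hax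
        subst this
        rcases hz'.cases_tail with rfl | ⟨w, -, hwz⟩
        · exact absurd hx' (fun he => keep_not_elem M D ha he)
        · exact absurd hwz.2 (fun he => keep_not_elem M D ha he)
    · rcases hc'.cases_tail with rfl | ⟨z', hz', hzc'⟩
      · have : z = a := elem_parent_unique M D hcelem hzc.1 hax'
        subst this
        rcases hz.cases_tail with rfl | ⟨w, -, hwz⟩
        · exact absurd hx (fun he => keep_not_elem M D ha he)
        · exact absurd hwz.2 (fun he => keep_not_elem M D ha he)
      · have hzz : z = z' := elem_parent_unique M D hcelem hzc.1 hzc'.1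
        subst hzz
        have hzel : Elem M.Arc D z := chain_target_elem M D hx hz
        exact ih z (TransGen.single hzc.1.1) a x x' ha hax hax' hx hx' hz hz'
end Chains
section Endp
open Classical Relation
variable {V : Type} [Finite V] (M : BTC V) (D : V → Prop)

/-- The kept endpoint reached from x (x itself if kept, else end of its chain). -/
def EndP (x b : V) : Prop :=
  Keep M.Arc D b ∧ (x = b ∨ (Elem M.Arc D x ∧
    ∃ c, ReflTransGen (EStep M D) x c ∧ SubArc M.Arc D c b))

lemma endp_exists {x : V} (hx : ¬ D x) : ∃ b, EndP M D x b := by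
  rcases notdel_split M D hx with hk | he
  · exact ⟨x, hk, Or.inl rfl⟩
  · obtain ⟨c, b, hc, hcb, hb⟩ := chain_exists M D x he
    exact ⟨b, hb, Or.inr ⟨he, c, hc, hcb⟩⟩

lemma endp_unique {x b b' : V} (h1 : EndP M D x b) (h2 : EndP M D x b') : b = b' := by
  obtain ⟨hb, h1⟩ := h1
  obtain ⟨hb', h2⟩ := h2
  rcases h1 with rfl | ⟨he, c, hc, hcb⟩
  · rcases h2 with rfl | ⟨he, _⟩
    · rfl
    · exact absurd he (fun h => keep_not_elem M D hb h)
  · rcases h2 with rfl | ⟨he', c', hc', hcb'⟩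
    · exact absurd he (fun h => keep_not_elem M D hb' h)
    · exact chain_unique M D x he c b c' b' hc hcb hb hc' hcb' hb'

lemma redarc_of_endp {a x b : V} (ha : Keep M.Arc D a) (hb : Keep M.Arc D b)
    (hax : SubArc M.Arc D a x) (he : EndP M D x b) :
    RedArc M.Arc D ⟨a, ha⟩ ⟨b, hb⟩ := by
  rcases he.2 with rfl | ⟨hex, c, hc, hcb⟩
  · exact ⟨a, ReflTransGen.refl, hax⟩
  · exact ⟨c, ReflTransGen.head ⟨hax, hex⟩ hc, hcb⟩

lemma endp_of_redarc {a b : {v : V // Keep M.Arc D v}} (h : RedArc M.Arc D a b) :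
    ∃ x, SubArc M.Arc D a.1 x ∧ EndP M D x b.1 := by
  obtain ⟨c, hc, hcb⟩ := h
  rcases hc.cases_head with he | ⟨x, hx, hxc⟩
  · exact ⟨b.1, he ▸ hcb, b.2, Or.inl rfl⟩
  · exact ⟨x, hx.1, b.2, Or.inr ⟨hx.2, c, hxc, hcb⟩⟩

/-- Key counting step: the arcs of the reduced network are in bijection with the
surviving arcs whose source is kept, provided no two such arcs share source and
endpoint. -/
lemma card_redarc
    (hKI : ∀ a x x' b, Keep M.Arc D a → SubArc M.Arc D a x → SubArc M.Arc D a x' →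
      EndP M D x b → EndP M D x' b → x = x') :
    Nat.card {q : {v : V // Keep M.Arc D v} × {v : V // Keep M.Arc D v} //
        RedArc M.Arc D q.1 q.2} =
      Nat.card {q : V × V // SubArc M.Arc D q.1 q.2 ∧ Keep M.Arc D q.1} := by
  symm
  have hend : ∀ q : {q : V × V // SubArc M.Arc D q.1 q.2 ∧ Keep M.Arc D q.1},
      ∃ b, EndP M D q.1.2 b := fun q => endp_exists M D q.2.1.2.2
  apply Nat.card_eq_of_bijective
    (fun q => ⟨(⟨q.1.1, q.2.2⟩, ⟨Classical.choose (hend q), (Classical.choose_spec (hend q)).1⟩),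
      redarc_of_endp M D q.2.2 (Classical.choose_spec (hend q)).1 q.2.1
        (Classical.choose_spec (hend q))⟩)
  constructor
  · rintro ⟨⟨a, x⟩, hq⟩ ⟨⟨a', x'⟩, hq'⟩ hfe
    have h1 := congrArg (fun z => z.1.1.1) hfe
    have h2 := congrArg (fun z => z.1.2.1) hfe
    simp only at h1 h2
    subst h1
    have := hKI a x x' _ hq.2 hq.1 hq'.1
      (Classical.choose_spec (hend ⟨(a, x), hq⟩))
      (h2 ▸ Classical.choose_spec (hend ⟨(a, x'), hq'⟩))
    subst this
    rfl
  · rintro ⟨⟨a, b⟩, hr⟩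
    obtain ⟨x, hax, hend'⟩ := endp_of_redarc M D hr
    refine ⟨⟨(a.1, x), hax, a.2⟩, ?_⟩
    have hbeq : Classical.choose (hend ⟨(a.1, x), hax, a.2⟩) = b.1 :=
      endp_unique M D (Classical.choose_spec (hend ⟨(a.1, x), hax, a.2⟩)) hend'
    apply Subtype.ext
    apply Prod.ext
    · rfl
    · exact Subtype.ext hbeq

/-- Surviving arcs split as: those with kept source, plus one arc per elementary node. -/
lemma card_subarc_split :
    Nat.card {q : V × V // SubArc M.Arc D q.1 q.2} =
      Nat.card {q : V × V // SubArc M.Arc D q.1 q.2 ∧ Keep M.Arc D q.1} +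
        Nat.card {v : V // Elem M.Arc D v} := by
  rw [card_partition (fun q : V × V => SubArc M.Arc D q.1 q.2)
    (fun q => Keep M.Arc D q.1)]
  congr 1
  symm
  apply Nat.card_eq_of_bijective (fun e =>
    ⟨(e.1, Classical.choose (elem_unique_child M D e.2)),
      (Classical.choose_spec (elem_unique_child M D e.2)).1,
      fun hk => keep_not_elem M D hk e.2⟩)
  constructor
  · rintro ⟨e, he⟩ ⟨e', he'⟩ hfe
    exact Subtype.ext (congrArg (fun z => z.1.1) hfe)
  · rintro ⟨⟨u, v⟩, hs, hnk⟩
    have hue : Elem M.Arc D u := by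
      rcases notdel_split M D hs.2.1 with hk | he
      · exact absurd hk hnk
      · exact he
    refine ⟨⟨u, hue⟩, ?_⟩
    apply Subtype.ext
    apply Prod.ext
    · rfl
    · exact ((Classical.choose_spec (elem_unique_child M D hue)).2 v hs).symm

/-- Node-count partition. -/
lemma card_node_split :
    Nat.card V = Nat.card {v : V // D v} + Nat.card {v : V // Elem M.Arc D v} +
      Nat.card {v : V // Keep M.Arc D v} := by
  have h1 : Nat.card V = Nat.card {v : V // D v} + Nat.card {v : V // ¬ D v} := by
    rw [← Nat.card_sum]
    exact (Nat.card_congr (Equiv.sumCompl D)).symm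
  have e1 : Nat.card {v : V // ¬ D v ∧ Elem M.Arc D v} = Nat.card {v : V // Elem M.Arc D v} :=
    Nat.card_congr (Equiv.subtypeEquivRight fun v => ⟨fun h => h.2, fun h => ⟨h.1, h⟩⟩)
  have e2 : Nat.card {v : V // ¬ D v ∧ ¬ Elem M.Arc D v} = Nat.card {v : V // Keep M.Arc D v} :=
    Nat.card_congr (Equiv.subtypeEquivRight fun v => Iff.rfl)
  rw [h1, card_partition (fun v : V => ¬ D v) (fun v => Elem M.Arc D v), e1, e2, add_assoc]

/-- Arc-count partition. -/
lemma card_arc_split :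
    Nat.card {q : V × V // M.Arc q.1 q.2} =
      Nat.card {q : V × V // SubArc M.Arc D q.1 q.2} +
        Nat.card {q : V × V // M.Arc q.1 q.2 ∧ (D q.1 ∨ D q.2)} := by
  have e2 : Nat.card {q : V × V // M.Arc q.1 q.2 ∧ ¬ (¬ D q.1 ∧ ¬ D q.2)} =
      Nat.card {q : V × V // M.Arc q.1 q.2 ∧ (D q.1 ∨ D q.2)} :=
    Nat.card_congr (Equiv.subtypeEquivRight fun q => by tauto)
  rw [card_partition (fun q : V × V => M.Arc q.1 q.2) (fun q => ¬ D q.1 ∧ ¬ D q.2), e2]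
  rfl

end Endp
section Master
open Classical Relation
variable {V : Type} [Finite V] (M : BTC V) (D : V → Prop)

/-- The key injectivity follows from: no kept hybrid node has an elementary parent
(given its other parent is not deleted). -/
lemma KI_of_EH
    (hEH : ∀ c b d : V, Elem M.Arc D c → SubArc M.Arc D c b → Keep M.Arc D b →
      IsHybrid M.Arc b → M.Arc d b → d ≠ c → ¬ D d → False) :
    ∀ a x x' b, Keep M.Arc D a → SubArc M.Arc D a x → SubArc M.Arc D a x' →
      EndP M D x b → EndP M D x' b → x = x' := by
  intro a x x' b ha hax hax' he he'
  have hb : Keep M.Arc D b := he.1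
  rcases he.2 with hxb | ⟨hex, c, hc, hcb⟩
  · rcases he'.2 with hxb' | ⟨hex', c', hc', hcb'⟩
    · rw [hxb, hxb']
    · -- x = b kept, x' elementary with chain ending c' → b; also a → b
      have hc'e : Elem M.Arc D c' := chain_target_elem M D hex' hc'
      have hac' : a ≠ c' := fun hh => keep_not_elem M D (hh ▸ ha) hc'e
      have hab : M.Arc a b := hxb ▸ hax.1
      have hhyb : IsHybrid M.Arc b := hybrid_of_two_parents M hac' hab hcb'.1
      exact (hEH c' b a hc'e hcb' hb hhyb hab hac' ha.1).elim
  · rcases he'.2 with hxb' | ⟨hex', c', hc', hcb'⟩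
    · have hce : Elem M.Arc D c := chain_target_elem M D hex hc
      have hac : a ≠ c := fun hh => keep_not_elem M D (hh ▸ ha) hce
      have hab : M.Arc a b := hxb' ▸ hax'.1
      exact ((hEH c b a hce hcb hb
        (hybrid_of_two_parents M hac hab hcb.1) hab hac ha.1).elim)
    · have hce : Elem M.Arc D c := chain_target_elem M D hex hc
      have hc'e : Elem M.Arc D c' := chain_target_elem M D hex' hc'
      by_cases hcc : c = c'
      · subst hcc
        exact chain_back_unique M D c a x x' ha hax hax' hex hex' hc hc'
      · exact ((hEH c b c' hce hcb hb
          (hybrid_of_two_parents M (Ne.symm hcc) hcb'.1 hcb.1) hcb'.1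
          (fun hh => hcc hh.symm) hc'e.1).elim)

/-- Master counting identity: #hybrids(N') + #(arcs incident to D) = #D + #hybrids(N). -/
lemma master_count (N' : BTC {v : V // Keep M.Arc D v})
    (hN' : ∀ a b, N'.Arc a b ↔ RedArc M.Arc D a b)
    (hEH : ∀ c b d : V, Elem M.Arc D c → SubArc M.Arc D c b → Keep M.Arc D b →
      IsHybrid M.Arc b → M.Arc d b → d ≠ c → ¬ D d → False) :
    Nat.card {v : {v : V // Keep M.Arc D v} // IsHybrid N'.Arc v} +
        Nat.card {q : V × V // M.Arc q.1 q.2 ∧ (D q.1 ∨ D q.2)} =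
      Nat.card {v : V // D v} + Nat.card {v : V // IsHybrid M.Arc v} := by
  have hdf := deg_formula M
  have hdf' := deg_formula N'
  have hE' : Nat.card {q : {v : V // Keep M.Arc D v} × {v : V // Keep M.Arc D v} //
      N'.Arc q.1 q.2} = Nat.card {q : V × V // SubArc M.Arc D q.1 q.2 ∧ Keep M.Arc D q.1} := by
    have heq : {q : {v : V // Keep M.Arc D v} × {v : V // Keep M.Arc D v} // N'.Arc q.1 q.2} ≃
        {q : {v : V // Keep M.Arc D v} × {v : V // Keep M.Arc D v} // RedArc M.Arc D q.1 q.2} :=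
      Equiv.subtypeEquivRight (fun q => hN' q.1 q.2)
    rw [Nat.card_congr heq]
    exact card_redarc M D (KI_of_EH M D hEH)
  have hns := card_node_split M D
  have hss := card_subarc_split M D
  have has := card_arc_split M D
  omega

end Master
section PathFacts
open Classical Relation
variable {V : Type} [Finite V] (N : BTC V) {ℓ u1 : V} {p : List V}

lemma hybrid_parents_pair {b c d : V} (hb : IsHybrid N.Arc b) (hc : N.Arc c b)
    (hd : N.Arc d b) (hcd : c ≠ d) : ∀ f, N.Arc f b → f = c ∨ f = d := by
  obtain ⟨e, he, hec, hall⟩ := card_two_other hb.1 hc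
  have : d = e := by
    rcases hall d hd with h | h
    · exact absurd h.symm hcd
    · exact h
  subst this
  exact hall

section WithPath
variable (hℓ : IsLeaf N.Arc ℓ) (hp : IsTHPath N.Arc ℓ p) (hu1 : p.head? = some u1)
include hℓ hp hu1

lemma path_ne : p ≠ [] := hp.1.1

lemma path_len_pos : 0 < p.length := List.length_pos_iff.mpr hp.1.1

lemma path_zero (h0 : 0 < p.length) : p[0] = u1 := by
  have := List.head?_eq_getElem? (l := p)
  rw [hu1] at this
  have h2 : p[0]? = some p[0] := List.getElem?_eq_getElem h0
  rw [h2] at this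
  exact (Option.some_inj.mp this.symm)

lemma path_tree {i : ℕ} (hi : i < p.length) : IsTreeNode N.Arc (p[i]) :=
  hp.1.2.2.2.1 _ (List.getElem_mem hi)

lemma mem_tree {x : V} (hx : x ∈ p) : IsTreeNode N.Arc x := hp.1.2.2.2.1 _ hx

lemma path_arc {i : ℕ} (hi : i + 1 < p.length) : N.Arc (p[i]'(by omega)) (p[i+1]'hi) := by
  have := List.isChain_iff_getElem.mp hp.1.2.2.1 i (by omega)
  simpa using this

lemma path_pairwise : List.Pairwise (Relation.TransGen N.Arc) p :=
  List.isChain_iff_pairwise.mp (hp.1.2.2.1.imp (fun a b h => TransGen.single h))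

lemma path_tg {i j : ℕ} (hij : i < j) (hj : j < p.length) :
    Relation.TransGen N.Arc (p[i]'(by omega)) (p[j]'hj) := by
  have := List.pairwise_iff_get.mp (path_pairwise N hℓ hp hu1) ⟨i, by omega⟩ ⟨j, hj⟩ hij
  simpa using this

lemma path_nodup : p.Nodup := by
  refine (path_pairwise N hℓ hp hu1).imp ?_
  intro a b htg he
  exact N.acyclic a (he ▸ htg)

lemma path_inj {i j : ℕ} (hi : i < p.length) (hj : j < p.length)
    (he : p[i]'hi = p[j]'hj) : i = j := by
  have := (path_nodup N hℓ hp hu1).get_inj_iff (i := ⟨i, hi⟩) (j := ⟨j, hj⟩)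
  simp only [List.get_eq_getElem] at this
  exact Fin.mk.injEq .. ▸ (this.mp he)

lemma path_last : p[p.length - 1]'(by have := path_len_pos N hℓ hp hu1; omega) = ℓ := by
  have h1 := List.getLast?_eq_getLast (path_ne N hℓ hp hu1)
  rw [hp.1.2.1] at h1
  have h2 := List.getLast_eq_getElem (path_ne N hℓ hp hu1)
  rw [← h2, Option.some_inj.mp h1.symm]

lemma leaf_no_child {y : V} (hy : N.Arc ℓ y) : False := card_zero_iff.mp hℓ.2 y hy

lemma last_no_child {y : V} (hy : N.Arc (p[p.length - 1]'(by have := path_len_pos N hℓ hp hu1; omega)) y) :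
    False := leaf_no_child N hℓ hp hu1 (path_last N hℓ hp hu1 ▸ hy)

/-- the off-path child of `p[i]`. -/
lemma off_child {i : ℕ} (hi : i + 1 < p.length) :
    ∃ v, N.Arc (p[i]'(by omega)) v ∧ v ≠ p[i+1]'hi ∧ IsHybrid N.Arc v ∧
      ∀ t, N.Arc (p[i]'(by omega)) t → t = p[i+1]'hi ∨ t = v := by
  obtain ⟨z, hz, hzne, hall⟩ := tree_two_children N (path_tree N hℓ hp hu1 (by omega)) (path_arc N hℓ hp hu1 hi)
  exact ⟨z, hz, hzne, hp.1.2.2.2.2.1 i hi z hz hzne, hall⟩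

lemma parent_of_mid {x : V} {j : ℕ} (hj : j < p.length) (h0 : 0 < j)
    (hx : N.Arc x (p[j]'hj)) : x = p[j-1]'(by omega) := by
  have harc : N.Arc (p[j-1]'(by omega)) (p[j]'hj) := by
    have := path_arc N hℓ hp hu1 (i := j-1) (by omega)
    convert this using 2 <;> omega
  exact tree_parent_unique N (path_tree N hℓ hp hu1 hj) hx harc

lemma no_parent_u1_mem {x : V} (hx : N.Arc x u1) : x ∉ p := by
  intro hmem
  obtain ⟨k, hk, hxe⟩ := List.mem_iff_getElem.mp hmem
  have h0 : 0 < p.length := path_len_pos N hℓ hp hu1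
  have hu : p[0] = u1 := path_zero N hℓ hp hu1 h0
  by_cases hk1 : k + 1 < p.length
  · obtain ⟨v, hv, hvne, hvhyb, hall⟩ := off_child N hℓ hp hu1 hk1
    rcases hall u1 (hxe ▸ hx) with h | h
    · have := path_inj N hℓ hp hu1 h0 hk1 (hu.trans h)
      omega
    · exact not_tree_hybrid N (hu ▸ path_tree N hℓ hp hu1 h0) (h ▸ hvhyb)
  · have hkl : k = p.length - 1 := by omega
    subst hkl
    exact last_no_child N hℓ hp hu1 (hxe ▸ hx)

lemma hybrid_not_mem {x : V} (hx : IsHybrid N.Arc x) : x ∉ p :=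
  fun hm => not_tree_hybrid N (mem_tree N hℓ hp hu1 hm) hx

lemma no_updown {i : ℕ} (hi : i < p.length) {x : V}
    (h1 : N.Arc (p[i]'hi) x) (h2 : N.Arc x u1) : False := by
  have h0 : 0 < p.length := path_len_pos N hℓ hp hu1
  have hu : p[0] = u1 := path_zero N hℓ hp hu1 h0
  have hdown : Relation.TransGen N.Arc (p[i]'hi) (p[0]'h0) := by
    rw [hu]; exact TransGen.head h1 (TransGen.single h2)
  rcases Nat.eq_zero_or_pos i with rfl | hipos
  · exact N.acyclic _ hdown
  · exact N.acyclic _ ((path_tg N hℓ hp hu1 hipos hi).trans hdown)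

/-- The main structural lemma: no kept hybrid node has an elementary parent. -/
lemma EH_main : ∀ c b d : V, Elem N.Arc (ExtDel N.Arc u1 p) c →
    SubArc N.Arc (ExtDel N.Arc u1 p) c b → Keep N.Arc (ExtDel N.Arc u1 p) b →
    IsHybrid N.Arc b → N.Arc d b → d ≠ c → ¬ ExtDel N.Arc u1 p d → False := by
  intro c b d hce hcb hb hhyb hdb hdc hdnD
  have hcnD : ¬ ExtDel N.Arc u1 p c := hce.1
  have hcbA : N.Arc c b := hcb.1
  have hbnD : ¬ ExtDel N.Arc u1 p b := hcb.2.2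
  rcases N.binary c with hct | hch
  swap
  · -- c hybrid: its unique child is a tree node
    exact not_tree_hybrid N (hybrid_child_tree N hch hcbA) hhyb
  -- c tree node with two children b, z
  obtain ⟨z, hz, hzb, hall⟩ := tree_two_children N hct hcbA
  have hzD : ExtDel N.Arc u1 p z := by
    by_contra hzn
    exact hzb (card_one_eq hce.2.1 ⟨hz, hcnD, hzn⟩ hcb)
  have hpar : ∀ f, N.Arc f b → f = c ∨ f = d := hybrid_parents_pair N hhyb hcbA hdb
    (fun he => hdc he.symm)
  rcases hzD with hzp | ⟨hzu1, hzhyb⟩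
  swap
  · -- z is the hybrid parent of u1: c has two hybrid children
    obtain ⟨t, ht, htt⟩ := N.treeChild c (by rw [tree_outdeg_two N hct hcbA]; omega)
    rcases hall t ht with rfl | rfl
    · exact not_tree_hybrid N htt hhyb
    · exact not_tree_hybrid N htt hzhyb
  -- z ∈ p
  obtain ⟨j, hj, hze⟩ := List.mem_iff_getElem.mp hzp
  have h0 : 0 < p.length := path_len_pos N hℓ hp hu1
  have hu : p[0] = u1 := path_zero N hℓ hp hu1 h0
  rcases Nat.eq_zero_or_pos j with rfl | hjpos
  swap
  · -- j > 0 : c is the parent of p[j], hence c = p[j-1] ∈ p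
    have := parent_of_mid N hℓ hp hu1 hj hjpos (show N.Arc c (p[j]'hj) by rw [hze]; exact hz)
    exact hcnD (Or.inl (this ▸ List.getElem_mem (l := p) (n := j-1) (by omega)))
  -- j = 0 : c is a tree-node parent of u1; contradict maximality of the TH-path
  have hcu1 : N.Arc c u1 := by rw [← hu, hze]; exact hz
  have hchildren : ∀ t, N.Arc c t → t = u1 ∨ t = b := by
    intro t ht
    rcases hall t ht with h | h
    · exact Or.inr h
    · exact Or.inl (h.trans (hze.symm.trans hu))
  -- b is not one of the off-path hybrid children of the path
  have hboff : ∀ k (hk : k + 1 < p.length) (v : V), N.Arc (p[k]'(by omega)) v →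
      v ≠ p[k+1]'hk → v ≠ b := by
    intro k hk v hv hvne hvb
    subst hvb
    rcases hpar _ hv with rfl | rfl
    · exact hcnD (Or.inl (List.getElem_mem _))
    · exact hdnD (Or.inl (List.getElem_mem _))
  -- build the extended pre-TH-path
  apply hp.2 c
  obtain ⟨q, qs, rfl⟩ : ∃ q qs, p = q :: qs := by
    rcases p with _ | ⟨q, qs⟩
    · exact absurd rfl (path_ne N hℓ hp hu1)
    · exact ⟨q, qs, rfl⟩
  refine ⟨List.cons_ne_nil _ _, ?_, ?_, ?_, ?_, ?_⟩
  · rw [List.getLast?_cons_cons]; exact hp.1.2.1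
  · change List.IsChain _ (c :: q :: qs); rw [List.isChain_cons_cons]
    refine ⟨?_, hp.1.2.2.1⟩
    have : q = u1 := by simpa using hu
    rw [this]; exact hcu1
  · intro u hu'
    rcases List.mem_cons.mp hu' with rfl | hm
    · exact hct
    · exact hp.1.2.2.2.1 _ hm
  · intro i hi v hv hvne
    rcases Nat.eq_zero_or_pos i with rfl | hipos
    · simp only [List.getElem_cons_zero, List.getElem_cons_succ] at hv hvne
      rcases hchildren v hv with h | h
      · exact absurd (h.trans (by simpa using hu.symm)) hvne
      · exact h ▸ hhyb
    · obtain ⟨i', rfl⟩ : ∃ i', i = i' + 1 := ⟨i - 1, by omega⟩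
      simp only [List.getElem_cons_succ] at hv hvne
      exact hp.1.2.2.2.2.1 i' (by simpa using hi) v hv hvne
  · intro i j hi hj hij v w hv hvne hw hwne
    have hvb : ∀ i (hi : i + 1 < (c :: q :: qs).length) (v : V),
        N.Arc ((c :: q :: qs)[i]'(by omega)) v → v ≠ (c :: q :: qs)[i+1]'hi →
        (i = 0 → v = b) ∧ (∀ i', i = i' + 1 → v ≠ b) := by
      intro i hi v hv hvne
      constructor
      · rintro rfl
        simp only [List.getElem_cons_zero, List.getElem_cons_succ] at hv hvne
        rcases hchildren v hv with h | h
        · exact absurd (h.trans (by simpa using hu.symm)) hvne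
        · exact h
      · rintro i' rfl
        simp only [List.getElem_cons_succ] at hv hvne
        exact hboff i' (by simpa using hi) v hv hvne
    rcases Nat.eq_zero_or_pos i with rfl | hipos
    · obtain ⟨j', rfl⟩ : ∃ j', j = j' + 1 := ⟨j - 1, by omega⟩
      have h1 : v = b := ((hvb 0 hi v hv hvne).1) rfl
      have h2 : w ≠ b := ((hvb (j'+1) hj w hw hwne).2) j' rfl
      rw [h1]; exact fun he => h2 he.symm
    · obtain ⟨i', rfl⟩ : ∃ i', i = i' + 1 := ⟨i - 1, by omega⟩
      rcases Nat.eq_zero_or_pos j with rfl | hjpos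
      · have h1 : w = b := ((hvb 0 hj w hw hwne).1) rfl
        have h2 : v ≠ b := ((hvb (i'+1) hi v hv hvne).2) i' rfl
        rw [h1]; exact h2
      · obtain ⟨j', rfl⟩ : ∃ j', j = j' + 1 := ⟨j - 1, by omega⟩
        simp only [List.getElem_cons_succ] at hv hvne hw hwne
        exact hp.1.2.2.2.2.2 i' j' (by simpa using hi) (by simpa using hj)
          (by omega) v w hv hvne hw hwne

end WithPath
end PathFacts
section Counts
open Classical Relation
variable {V : Type} [Finite V]

lemma card_le_one_of {P : V → Prop} (h : ∀ a b, P a → P b → a = b) :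
    Nat.card {x : V // P x} ≤ 1 := by
  have : Subsingleton {x : V // P x} := ⟨fun a b => Subtype.ext (h _ _ a.2 b.2)⟩
  have : Fintype {x : V // P x} := Fintype.ofFinite _
  rw [Nat.card_eq_fintype_card]
  exact Fintype.card_le_one_iff_subsingleton.mpr ‹_›

lemma card_eq_one_of {P : V → Prop} {a : V} (ha : P a) (h : ∀ b, P b → b = a) :
    Nat.card {x : V // P x} = 1 := by
  rw [Nat.card_eq_one_iff_unique]
  exact ⟨⟨fun x y => Subtype.ext ((h _ x.2).trans (h _ y.2).symm)⟩, ⟨a, ha⟩⟩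

lemma card_mem_list {l : List V} (hl : l.Nodup) :
    Nat.card {x : V // x ∈ l} = l.length := by
  have : Fintype V := Fintype.ofFinite V
  rw [Nat.card_congr (Equiv.subtypeEquivRight (fun x : V => (List.mem_toFinset (l := l)).symm))]
  rw [Nat.card_eq_fintype_card, Fintype.card_coe, List.toFinset_card_of_nodup hl]

variable (N : BTC V) {ℓ u1 : V} {p : List V}
variable (hℓ : IsLeaf N.Arc ℓ) (hp : IsTHPath N.Arc ℓ p) (hu1 : p.head? = some u1)
include hℓ hp hu1

lemma cardD_T (hT : ∀ x, N.Arc x u1 → IsTreeNode N.Arc x) :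
    Nat.card {v : V // ExtDel N.Arc u1 p v} = p.length := by
  rw [← card_mem_list (path_nodup N hℓ hp hu1)]
  apply Nat.card_congr
  apply Equiv.subtypeEquivRight
  intro x
  constructor
  · rintro (hm | ⟨harc, hhyb⟩)
    · exact hm
    · exact absurd hhyb (fun hh => not_tree_hybrid N (hT x harc) hh)
  · exact Or.inl

lemma u1_tree : IsTreeNode N.Arc u1 := by
  have h0 := path_len_pos N hℓ hp hu1
  exact path_zero N hℓ hp hu1 h0 ▸ path_tree N hℓ hp hu1 h0

lemma u1_mem : u1 ∈ p := by
  have h0 := path_len_pos N hℓ hp hu1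
  exact path_zero N hℓ hp hu1 h0 ▸ List.getElem_mem h0

lemma parent_u1_eq {x g : V} (hx : N.Arc x u1) (hg : N.Arc g u1) : x = g :=
  tree_parent_unique N (u1_tree N hℓ hp hu1) hx hg

lemma cardD_H {g : V} (hg1 : N.Arc g u1) (hg2 : IsHybrid N.Arc g) :
    Nat.card {v : V // ExtDel N.Arc u1 p v} = p.length + 1 := by
  have hgnp : g ∉ p := hybrid_not_mem N hℓ hp hu1 hg2
  have hnd : (g :: p).Nodup := List.nodup_cons.mpr ⟨hgnp, path_nodup N hℓ hp hu1⟩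
  have := card_mem_list hnd
  simp only [List.length_cons] at this
  rw [← this]
  apply Nat.card_congr
  apply Equiv.subtypeEquivRight
  intro x
  constructor
  · rintro (hm | ⟨harc, hhyb⟩)
    · exact List.mem_cons_of_mem _ hm
    · exact (parent_u1_eq N hℓ hp hu1 harc hg1) ▸ List.mem_cons_self
  · intro hm
    rcases List.mem_cons.mp hm with rfl | hm
    · exact Or.inr ⟨hg1, hg2⟩
    · exact Or.inl hm

end Counts
section Counts2
open Classical Relation
variable {V : Type} [Finite V] (N : BTC V) {ℓ u1 : V} {p : List V}
variable (hℓ : IsLeaf N.Arc ℓ) (hp : IsTHPath N.Arc ℓ p) (hu1 : p.head? = some u1)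
include hℓ hp hu1

lemma cardInc_T {w : V} (hT : ∀ x, N.Arc x u1 → IsTreeNode N.Arc x) (hw : N.Arc w u1) :
    Nat.card {q : V × V // N.Arc q.1 q.2 ∧
        (ExtDel N.Arc u1 p q.1 ∨ ExtDel N.Arc u1 p q.2)} =
      (p.length - 1) + (p.length - 1) + 1 := by
  have hft : Fintype V := Fintype.ofFinite V
  have h0 := path_len_pos N hℓ hp hu1
  have hu := path_zero N hℓ hp hu1 h0
  choose vt hvt1 hvt2 hvt3 hvt4 using fun i (hi : i + 1 < p.length) =>
    off_child N hℓ hp hu1 hi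
  have hD : ∀ x, ExtDel N.Arc u1 p x ↔ x ∈ p := by
    intro x
    constructor
    · rintro (hm | ⟨ha, hh⟩)
      · exact hm
      · exact absurd hh (fun hh => not_tree_hybrid N (hT x ha) hh)
    · exact Or.inl
  set f1 : ℕ → V × V := fun i => (p.getD i u1, p.getD (i+1) u1) with hf1
  set f2 : ℕ → V × V :=
    fun i => (p.getD i u1, if hi : i + 1 < p.length then vt i hi else u1) with hf2
  have hgetD : ∀ i (hi : i < p.length), p.getD i u1 = p[i]'hi :=
    fun i hi => List.getD_eq_getElem p u1 hi
  set S : Finset (V × V) :=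
    ((Finset.range (p.length - 1)).image f1 ∪ (Finset.range (p.length - 1)).image f2)
      ∪ {(w, u1)} with hS
  have hmem : ∀ q : V × V, (N.Arc q.1 q.2 ∧
      (ExtDel N.Arc u1 p q.1 ∨ ExtDel N.Arc u1 p q.2)) ↔ q ∈ S := by
    rintro ⟨a, b⟩
    simp only [hD]
    constructor
    · rintro ⟨harc, hab | hab⟩
      · obtain ⟨i, hi, hae⟩ := List.mem_iff_getElem.mp hab
        by_cases hi1 : i + 1 < p.length
        · rcases hvt4 i hi1 b (by rw [hae]; exact harc) with hb | hb
          · apply Finset.mem_union_left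
            apply Finset.mem_union_left
            apply Finset.mem_image.mpr
            exact ⟨i, Finset.mem_range.mpr (by omega),
              by rw [hf1]; dsimp only; rw [hgetD i (by omega), hgetD (i+1) hi1, hae, ← hb]⟩
          · apply Finset.mem_union_left
            apply Finset.mem_union_right
            apply Finset.mem_image.mpr
            refine ⟨i, Finset.mem_range.mpr (by omega), ?_⟩
            rw [hf2]; dsimp only
            rw [hgetD i (by omega), hae, dif_pos hi1, ← hb]
        · have : i = p.length - 1 := by omega
          subst this
          exact absurd harc (by intro hc; exact last_no_child N hℓ hp hu1 (by rw [hae]; exact hc))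
      · obtain ⟨j, hj, hbe⟩ := List.mem_iff_getElem.mp hab
        rcases Nat.eq_zero_or_pos j with rfl | hjpos
        · have hbu : b = u1 := by rw [← hbe, hu]
          have haw : a = w := parent_u1_eq N hℓ hp hu1 (hbu ▸ harc) hw
          apply Finset.mem_union_right
          simp [haw, hbu]
        · have ha' : a = p[j-1]'(by omega) :=
            parent_of_mid N hℓ hp hu1 hj hjpos (by rw [hbe]; exact harc)
          apply Finset.mem_union_left
          apply Finset.mem_union_left
          apply Finset.mem_image.mpr
          refine ⟨j - 1, Finset.mem_range.mpr (by omega), ?_⟩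
          rw [hf1]; dsimp only
          rw [hgetD (j-1) (by omega)]
          have hj1 : j - 1 + 1 = j := by omega
          rw [show p.getD (j-1+1) u1 = b by rw [hj1, hgetD j hj, hbe], ← ha']
    · intro hq
      rcases Finset.mem_union.mp hq with hq | hq
      · rcases Finset.mem_union.mp hq with hq | hq
        · obtain ⟨i, hir, hfe⟩ := Finset.mem_image.mp hq
          have hir' : i + 1 < p.length := by
            have := Finset.mem_range.mp hir; omega
          rw [hf1] at hfe; dsimp only at hfe
          rw [hgetD i (by omega), hgetD (i+1) hir'] at hfe
          have h1 : (p[i]'(by omega)) = a := congrArg Prod.fst hfe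
          have h2 : (p[i+1]'hir') = b := congrArg Prod.snd hfe
          exact ⟨by rw [← h1, ← h2]; exact path_arc N hℓ hp hu1 hir',
            Or.inl (h1 ▸ List.getElem_mem _)⟩
        · obtain ⟨i, hir, hfe⟩ := Finset.mem_image.mp hq
          have hir' : i + 1 < p.length := by
            have := Finset.mem_range.mp hir; omega
          rw [hf2] at hfe; dsimp only at hfe
          rw [hgetD i (by omega), dif_pos hir'] at hfe
          have h1 : (p[i]'(by omega)) = a := congrArg Prod.fst hfe
          have h2 : vt i hir' = b := congrArg Prod.snd hfe
          exact ⟨by rw [← h1, ← h2]; exact hvt1 i hir',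
            Or.inl (h1 ▸ List.getElem_mem _)⟩
      · have : a = w ∧ b = u1 := by simpa [Prod.ext_iff] using hq
        exact ⟨this.1 ▸ this.2 ▸ hw, Or.inr (this.2 ▸ u1_mem N hℓ hp hu1)⟩
  rw [Nat.card_congr (Equiv.subtypeEquivRight hmem), Nat.card_eq_fintype_card,
    Fintype.card_coe]
  have hinj1 : Set.InjOn f1 (Finset.range (p.length - 1)) := by
    intro i hi j hj he
    simp only [Finset.coe_range, Set.mem_Iio] at hi hj
    have h1 : (p[i]'(by omega)) = (p[j]'(by omega)) := by
      have := congrArg Prod.fst he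
      simp only [hf1, hf2] at this
      rwa [hgetD i (by omega), hgetD j (by omega)] at this
    exact path_inj N hℓ hp hu1 (by omega) (by omega) h1
  have hinj2 : Set.InjOn f2 (Finset.range (p.length - 1)) := by
    intro i hi j hj he
    simp only [Finset.coe_range, Set.mem_Iio] at hi hj
    have h1 : (p[i]'(by omega)) = (p[j]'(by omega)) := by
      have := congrArg Prod.fst he
      simp only [hf1, hf2] at this
      rwa [hgetD i (by omega), hgetD j (by omega)] at this
    exact path_inj N hℓ hp hu1 (by omega) (by omega) h1
  have hd12 : Disjoint ((Finset.range (p.length - 1)).image f1)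
      ((Finset.range (p.length - 1)).image f2) := by
    rw [Finset.disjoint_left]
    intro q hq1 hq2
    obtain ⟨i, hir, hfe⟩ := Finset.mem_image.mp hq1
    obtain ⟨j, hjr, hge⟩ := Finset.mem_image.mp hq2
    have hir' : i + 1 < p.length := by have := Finset.mem_range.mp hir; omega
    have hjr' : j + 1 < p.length := by have := Finset.mem_range.mp hjr; omega
    have hij : i = j := by
      apply path_inj N hℓ hp hu1 (i := i) (j := j) (by omega) (by omega)
      have := (congrArg Prod.fst hfe).trans (congrArg Prod.fst hge).symm
      simp only [hf1, hf2] at this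
      rwa [hgetD i (by omega), hgetD j (by omega)] at this
    subst hij
    have := (congrArg Prod.snd hfe).trans (congrArg Prod.snd hge).symm
    simp only [hf1, hf2] at this
    rw [hgetD (i+1) hir', dif_pos hir'] at this
    exact hvt2 i hir' this.symm
  have hwnot : (w, u1) ∉ ((Finset.range (p.length - 1)).image f1 ∪
      (Finset.range (p.length - 1)).image f2) := by
    intro hq
    have hwp : w ∉ p := no_parent_u1_mem N hℓ hp hu1 hw
    rcases Finset.mem_union.mp hq with hq | hq
    all_goals {
      obtain ⟨i, hir, hfe⟩ := Finset.mem_image.mp hq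
      have hir' : i < p.length := by have := Finset.mem_range.mp hir; omega
      have h1 : (p[i]'hir') = w := by
        have := congrArg Prod.fst hfe
        simp only [hf1, hf2] at this
        rwa [hgetD i hir'] at this
      exact hwp (h1 ▸ List.getElem_mem _)
    }
  rw [hS, Finset.card_union_of_disjoint (Finset.disjoint_singleton_right.mpr hwnot),
    Finset.card_union_of_disjoint hd12, Finset.card_image_of_injOn hinj1,
    Finset.card_image_of_injOn hinj2, Finset.card_range, Finset.card_singleton]

end Counts2
section Counts3
open Classical Relation
variable {V : Type} [Finite V] (N : BTC V) {ℓ u1 : V} {p : List V}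
variable (hℓ : IsLeaf N.Arc ℓ) (hp : IsTHPath N.Arc ℓ p) (hu1 : p.head? = some u1)
include hℓ hp hu1

lemma cardInc_H {g : V} (hg1 : N.Arc g u1) (hg2 : IsHybrid N.Arc g) :
    Nat.card {q : V × V // N.Arc q.1 q.2 ∧
        (ExtDel N.Arc u1 p q.1 ∨ ExtDel N.Arc u1 p q.2)} =
      (p.length - 1) + (p.length - 1) + 3 := by
  have hft : Fintype V := Fintype.ofFinite V
  have h0 := path_len_pos N hℓ hp hu1
  have hu := path_zero N hℓ hp hu1 h0
  choose vt hvt1 hvt2 hvt3 hvt4 using fun i (hi : i + 1 < p.length) =>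
    off_child N hℓ hp hu1 hi
  obtain ⟨x1, x2, hx12, hxa1, hxa2, hxall⟩ := hybrid_two_parents N hg2
  have hgnp : g ∉ p := hybrid_not_mem N hℓ hp hu1 hg2
  have hgu1 : g ≠ u1 := btc_ne N hg1
  have hD : ∀ x, ExtDel N.Arc u1 p x ↔ x ∈ p ∨ x = g := by
    intro x
    constructor
    · rintro (hm | ⟨ha, hh⟩)
      · exact Or.inl hm
      · exact Or.inr (parent_u1_eq N hℓ hp hu1 ha hg1)
    · rintro (hm | rfl)
      · exact Or.inl hm
      · exact Or.inr ⟨hg1, hg2⟩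
  set f1 : ℕ → V × V := fun i => (p.getD i u1, p.getD (i+1) u1) with hf1
  set f2 : ℕ → V × V :=
    fun i => (p.getD i u1, if hi : i + 1 < p.length then vt i hi else u1) with hf2
  have hgetD : ∀ i (hi : i < p.length), p.getD i u1 = p[i]'hi :=
    fun i hi => List.getD_eq_getElem p u1 hi
  set S3 : Finset (V × V) := insert (g, u1) (insert (x1, g) {(x2, g)}) with hS3
  set S : Finset (V × V) :=
    ((Finset.range (p.length - 1)).image f1 ∪ (Finset.range (p.length - 1)).image f2)
      ∪ S3 with hS
  have hmem : ∀ q : V × V, (N.Arc q.1 q.2 ∧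
      (ExtDel N.Arc u1 p q.1 ∨ ExtDel N.Arc u1 p q.2)) ↔ q ∈ S := by
    rintro ⟨a, b⟩
    simp only [hD]
    constructor
    · rintro ⟨harc, hab | hab⟩
      · rcases hab with hab | rfl
        · obtain ⟨i, hi, hae⟩ := List.mem_iff_getElem.mp hab
          by_cases hi1 : i + 1 < p.length
          · rcases hvt4 i hi1 b (by rw [hae]; exact harc) with hb | hb
            · apply Finset.mem_union_left
              apply Finset.mem_union_left
              apply Finset.mem_image.mpr
              exact ⟨i, Finset.mem_range.mpr (by omega),
                by rw [hf1]; dsimp only; rw [hgetD i (by omega), hgetD (i+1) hi1, hae, ← hb]⟩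
            · apply Finset.mem_union_left
              apply Finset.mem_union_right
              apply Finset.mem_image.mpr
              refine ⟨i, Finset.mem_range.mpr (by omega), ?_⟩
              rw [hf2]; dsimp only
              rw [hgetD i (by omega), hae, dif_pos hi1, ← hb]
          · have : i = p.length - 1 := by omega
            subst this
            exact absurd harc
              (by intro hc; exact last_no_child N hℓ hp hu1 (by rw [hae]; exact hc))
        · -- a = g : its unique child is u1
          have hbu : b = u1 := hybrid_child_unique N hg2 harc hg1
          apply Finset.mem_union_right
          rw [hS3, hbu]
          exact Finset.mem_insert_self _ _
      · rcases hab with hab | rfl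
        · obtain ⟨j, hj, hbe⟩ := List.mem_iff_getElem.mp hab
          rcases Nat.eq_zero_or_pos j with rfl | hjpos
          · have hbu : b = u1 := by rw [← hbe, hu]
            have hag : a = g := parent_u1_eq N hℓ hp hu1 (hbu ▸ harc) hg1
            apply Finset.mem_union_right
            rw [hS3, hbu, hag]
            exact Finset.mem_insert_self _ _
          · have ha' : a = p[j-1]'(by omega) :=
              parent_of_mid N hℓ hp hu1 hj hjpos (by rw [hbe]; exact harc)
            apply Finset.mem_union_left
            apply Finset.mem_union_left
            apply Finset.mem_image.mpr
            refine ⟨j - 1, Finset.mem_range.mpr (by omega), ?_⟩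
            rw [hf1]; dsimp only
            rw [hgetD (j-1) (by omega)]
            have hj1 : j - 1 + 1 = j := by omega
            rw [show p.getD (j-1+1) u1 = b by rw [hj1, hgetD j hj, hbe], ← ha']
        · -- b = g : a is one of g's two parents
          apply Finset.mem_union_right
          rw [hS3]
          rcases hxall a harc with rfl | rfl
          · exact Finset.mem_insert_of_mem (Finset.mem_insert_self _ _)
          · exact Finset.mem_insert_of_mem
              (Finset.mem_insert_of_mem (Finset.mem_singleton_self _))
    · intro hq
      rcases Finset.mem_union.mp hq with hq | hq
      · rcases Finset.mem_union.mp hq with hq | hq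
        · obtain ⟨i, hir, hfe⟩ := Finset.mem_image.mp hq
          have hir' : i + 1 < p.length := by
            have := Finset.mem_range.mp hir; omega
          rw [hf1] at hfe; dsimp only at hfe
          rw [hgetD i (by omega), hgetD (i+1) hir'] at hfe
          have h1 : (p[i]'(by omega)) = a := congrArg Prod.fst hfe
          have h2 : (p[i+1]'hir') = b := congrArg Prod.snd hfe
          exact ⟨by rw [← h1, ← h2]; exact path_arc N hℓ hp hu1 hir',
            Or.inl (Or.inl (h1 ▸ List.getElem_mem _))⟩
        · obtain ⟨i, hir, hfe⟩ := Finset.mem_image.mp hq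
          have hir' : i + 1 < p.length := by
            have := Finset.mem_range.mp hir; omega
          rw [hf2] at hfe; dsimp only at hfe
          rw [hgetD i (by omega), dif_pos hir'] at hfe
          have h1 : (p[i]'(by omega)) = a := congrArg Prod.fst hfe
          have h2 : vt i hir' = b := congrArg Prod.snd hfe
          exact ⟨by rw [← h1, ← h2]; exact hvt1 i hir',
            Or.inl (Or.inl (h1 ▸ List.getElem_mem _))⟩
      · rw [hS3] at hq
        rcases Finset.mem_insert.mp hq with hq | hq
        · have : a = g ∧ b = u1 := by simpa [Prod.ext_iff] using hq
          exact ⟨this.1 ▸ this.2 ▸ hg1, Or.inl (Or.inr this.1)⟩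
        · rcases Finset.mem_insert.mp hq with hq | hq
          · have : a = x1 ∧ b = g := by simpa [Prod.ext_iff] using hq
            exact ⟨this.1 ▸ this.2 ▸ hxa1, Or.inr (Or.inr this.2)⟩
          · have : a = x2 ∧ b = g := by
              simpa [Prod.ext_iff] using Finset.mem_singleton.mp hq
            exact ⟨this.1 ▸ this.2 ▸ hxa2, Or.inr (Or.inr this.2)⟩
  rw [Nat.card_congr (Equiv.subtypeEquivRight hmem), Nat.card_eq_fintype_card,
    Fintype.card_coe]
  have hinj1 : Set.InjOn f1 (Finset.range (p.length - 1)) := by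
    intro i hi j hj he
    simp only [Finset.coe_range, Set.mem_Iio] at hi hj
    have h1 : (p[i]'(by omega)) = (p[j]'(by omega)) := by
      have := congrArg Prod.fst he
      simp only [hf1, hf2] at this
      rwa [hgetD i (by omega), hgetD j (by omega)] at this
    exact path_inj N hℓ hp hu1 (by omega) (by omega) h1
  have hinj2 : Set.InjOn f2 (Finset.range (p.length - 1)) := by
    intro i hi j hj he
    simp only [Finset.coe_range, Set.mem_Iio] at hi hj
    have h1 : (p[i]'(by omega)) = (p[j]'(by omega)) := by
      have := congrArg Prod.fst he
      simp only [hf1, hf2] at this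
      rwa [hgetD i (by omega), hgetD j (by omega)] at this
    exact path_inj N hℓ hp hu1 (by omega) (by omega) h1
  have hd12 : Disjoint ((Finset.range (p.length - 1)).image f1)
      ((Finset.range (p.length - 1)).image f2) := by
    rw [Finset.disjoint_left]
    intro q hq1 hq2
    obtain ⟨i, hir, hfe⟩ := Finset.mem_image.mp hq1
    obtain ⟨j, hjr, hge⟩ := Finset.mem_image.mp hq2
    have hir' : i + 1 < p.length := by have := Finset.mem_range.mp hir; omega
    have hjr' : j + 1 < p.length := by have := Finset.mem_range.mp hjr; omega
    have hij : i = j := by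
      apply path_inj N hℓ hp hu1 (i := i) (j := j) (by omega) (by omega)
      have := (congrArg Prod.fst hfe).trans (congrArg Prod.fst hge).symm
      simp only [hf1, hf2] at this
      rwa [hgetD i (by omega), hgetD j (by omega)] at this
    subst hij
    have := (congrArg Prod.snd hfe).trans (congrArg Prod.snd hge).symm
    simp only [hf1, hf2] at this
    rw [hgetD (i+1) hir', dif_pos hir'] at this
    exact hvt2 i hir' this.symm
  have hnotin : ∀ y : V, ∀ hy : (y, g) ∈ S3 ∨ (g, u1) ∈ S3, True := fun _ _ => trivial
  have hS3not : ∀ q ∈ S3, q ∉ ((Finset.range (p.length - 1)).image f1 ∪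
      (Finset.range (p.length - 1)).image f2) := by
    intro q hq3 hq
    have hsnd : q.2 = u1 ∨ q.2 = g := by
      rw [hS3] at hq3
      rcases Finset.mem_insert.mp hq3 with rfl | hq3
      · exact Or.inl rfl
      · rcases Finset.mem_insert.mp hq3 with rfl | hq3
        · exact Or.inr rfl
        · exact Or.inr (congrArg Prod.snd (Finset.mem_singleton.mp hq3))
    rcases Finset.mem_union.mp hq with hq | hq
    · obtain ⟨i, hir, hfe⟩ := Finset.mem_image.mp hq
      have hir' : i + 1 < p.length := by have := Finset.mem_range.mp hir; omega
      have h2 : (p[i+1]'hir') = q.2 := by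
        have := congrArg Prod.snd hfe
        simp only [hf1, hf2] at this
        rwa [hgetD (i+1) hir'] at this
      rcases hsnd with hqq | hqq
      · -- q.2 = u1 = p[0] : then 0 = i+1, impossible
        rw [hqq, ← hu] at h2
        have := path_inj N hℓ hp hu1 hir' h0 h2
        omega
      · exact hgnp (hqq ▸ h2 ▸ List.getElem_mem _)
    · obtain ⟨i, hir, hfe⟩ := Finset.mem_image.mp hq
      have hir' : i + 1 < p.length := by have := Finset.mem_range.mp hir; omega
      have h2 : vt i hir' = q.2 := by
        have := congrArg Prod.snd hfe
        simp only [hf1, hf2] at this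
        rwa [dif_pos hir'] at this
      rcases hsnd with hqq | hqq
      · -- vt i = u1 = p[0] : hybrid vs tree member
        exact not_tree_hybrid N (u1_tree N hℓ hp hu1)
          ((h2.trans hqq) ▸ hvt3 i hir')
      · -- vt i = g, but g is a parent of u1 : cycle
        exact no_updown N hℓ hp hu1 (i := i) (by omega)
          (hvt1 i hir') ((h2.trans hqq) ▸ hg1)
  have hdS3 : Disjoint (((Finset.range (p.length - 1)).image f1 ∪
      (Finset.range (p.length - 1)).image f2)) S3 := by
    rw [Finset.disjoint_right]
    exact fun q hq3 hq => hS3not q hq3 hq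
  have hcard3 : S3.card = 3 := by
    rw [hS3]
    rw [Finset.card_insert_of_notMem, Finset.card_insert_of_notMem, Finset.card_singleton]
    · intro hm
      have : x1 = x2 ∧ g = g := by simpa [Prod.ext_iff] using Finset.mem_singleton.mp hm
      exact hx12 this.1
    · intro hm
      rcases Finset.mem_insert.mp hm with hm | hm
      · exact hgu1 (congrArg Prod.snd hm).symm
      · exact hgu1 (congrArg Prod.snd (Finset.mem_singleton.mp hm)).symm
  rw [hS, Finset.card_union_of_disjoint hdS3, Finset.card_union_of_disjoint hd12,
    Finset.card_image_of_injOn hinj1, Finset.card_image_of_injOn hinj2,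
    Finset.card_range, hcard3]

end Counts3
section RootCase
open Classical Relation
variable {V : Type} [Finite V] (N : BTC V) {ℓ u1 : V} {p : List V}
variable (hℓ : IsLeaf N.Arc ℓ) (hp : IsTHPath N.Arc ℓ p) (hu1 : p.head? = some u1)
include hℓ hp hu1

lemma root_case (hnopar : ∀ x, ¬ N.Arc x u1)
    (N' : BTC {v : V // Keep N.Arc (ExtDel N.Arc u1 p) v})
    (hN' : ∀ a b, N'.Arc a b ↔ RedArc N.Arc (ExtDel N.Arc u1 p) a b) : False := by
  have h0 := path_len_pos N hℓ hp hu1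
  have hu := path_zero N hℓ hp hu1 h0
  choose vt hvt1 hvt2 hvt3 hvt4 using fun i (hi : i + 1 < p.length) =>
    off_child N hℓ hp hu1 hi
  have hDiff : ∀ x, (ExtDel N.Arc u1 p) x ↔ x ∈ p := by
    intro x; constructor
    · rintro (hm | ⟨ha, _⟩)
      · exact hm
      · exact absurd ha (hnopar x)
    · exact Or.inl
  have hu1D : (ExtDel N.Arc u1 p) u1 := (hDiff u1).mpr (u1_mem N hℓ hp hu1)
  have hu1root : indeg N.Arc u1 = 0 := card_zero_iff.mpr hnopar
  obtain ⟨rt, hrt, hrtu⟩ := N.uniqueRoot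
  have hroot_eq : ∀ v, indeg N.Arc v = 0 → v = u1 :=
    fun v hv => (hrtu v hv).trans (hrtu u1 hu1root).symm
  -- off-path hybrid children are elementary
  have helem_vt : ∀ i (hi1 : i + 1 < p.length), Elem N.Arc (ExtDel N.Arc u1 p) (vt i hi1) := by
    intro i hi1
    have hvtnD : ¬ (ExtDel N.Arc u1 p) (vt i hi1) := fun hD' =>
      hybrid_not_mem N hℓ hp hu1 (hvt3 i hi1) ((hDiff _).mp hD')
    obtain ⟨y, hy⟩ := card_one_exists (hvt3 i hi1).2
    have hynD : ¬ (ExtDel N.Arc u1 p) y := by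
      intro hyD
      obtain ⟨k, hk, hke⟩ := List.mem_iff_getElem.mp ((hDiff y).mp hyD)
      rcases Nat.eq_zero_or_pos k with rfl | hkpos
      · exact hnopar (vt i hi1) (by rw [← hu, hke]; exact hy)
      · have := parent_of_mid N hℓ hp hu1 hk hkpos (by rw [hke]; exact hy)
        exact hybrid_not_mem N hℓ hp hu1 (this ▸ hvt3 i hi1) (List.getElem_mem _)
    refine ⟨hvtnD, ?_, ?_⟩
    · exact card_eq_one_of (a := y) ⟨hy, hvtnD, hynD⟩
        (fun b hb => hybrid_child_unique N (hvt3 i hi1) hb.1 hy)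
    · obtain ⟨a0, b0, hab0, ha0, hb0, hall0⟩ := hybrid_two_parents N (hvt3 i hi1)
      apply card_le_one_of
      intro q q' hq hq'
      have hpiD : (ExtDel N.Arc u1 p) (p[i]'(by omega)) := (hDiff _).mpr (List.getElem_mem _)
      have hqne : q ≠ p[i]'(by omega) := fun he => hq.2.1 (he ▸ hpiD)
      have hqne' : q' ≠ p[i]'(by omega) := fun he => hq'.2.1 (he ▸ hpiD)
      rcases hall0 _ (hvt1 i hi1) with hpa | hpb
      · have h1 : q = b0 := by
          rcases hall0 q hq.1 with h | h
          · exact absurd (h.trans hpa.symm) hqne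
          · exact h
        have h2 : q' = b0 := by
          rcases hall0 q' hq'.1 with h | h
          · exact absurd (h.trans hpa.symm) hqne'
          · exact h
        rw [h1, h2]
      · have h1 : q = a0 := by
          rcases hall0 q hq.1 with h | h
          · exact h
          · exact absurd (h.trans hpb.symm) hqne
        have h2 : q' = a0 := by
          rcases hall0 q' hq'.1 with h | h
          · exact h
          · exact absurd (h.trans hpb.symm) hqne'
        rw [h1, h2]
  -- every elementary node has a surviving parent
  have hpar_elem : ∀ c, Elem N.Arc (ExtDel N.Arc u1 p) c → ∃ d, SubArc N.Arc (ExtDel N.Arc u1 p) d c := by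
    intro c hc
    have hcnD : ¬ (ExtDel N.Arc u1 p) c := hc.1
    have hcne : c ≠ u1 := fun he => hcnD (he ▸ hu1D)
    by_contra hno
    push_neg at hno
    have hdel : ∀ d, N.Arc d c → (ExtDel N.Arc u1 p) d := by
      intro d hd
      by_contra hdn
      exact hno d ⟨hd, hdn, hcnD⟩
    have hne0 : indeg N.Arc c ≠ 0 := fun hz => hcne (hroot_eq c hz)
    have hex : ∃ d, N.Arc d c := by
      by_contra hne
      push_neg at hne
      exact hne0 (card_zero_iff.mpr hne)
    obtain ⟨d0, hd0⟩ := hex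
    have hoff : ∀ d, N.Arc d c → ∃ i, ∃ hi : i + 1 < p.length,
        N.Arc (p[i]'(by omega)) c ∧ c ≠ p[i+1]'hi := by
      intro d hd
      obtain ⟨i, hi, hde⟩ := List.mem_iff_getElem.mp ((hDiff d).mp (hdel d hd))
      by_cases hi1 : i + 1 < p.length
      · refine ⟨i, hi1, by rw [hde]; exact hd, ?_⟩
        intro he
        exact hcnD ((hDiff c).mpr (he ▸ List.getElem_mem _))
      · have : i = p.length - 1 := by omega
        subst this
        exact (last_no_child N hℓ hp hu1 (by rw [hde]; exact hd)).elim
    obtain ⟨i, hi1, harc0, hne0'⟩ := hoff d0 hd0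
    have hchyb : IsHybrid N.Arc c := by
      rcases hvt4 i hi1 c harc0 with he | he
      · exact absurd he hne0'
      · rw [he]; exact hvt3 i hi1
    obtain ⟨a, b, hab, haa, hba, hall⟩ := hybrid_two_parents N hchyb
    obtain ⟨ia, hia, harca, hnea⟩ := hoff a haa
    obtain ⟨ib, hib, harcb, hneb⟩ := hoff b hba
    have haD := (hDiff a).mp (hdel a haa)
    have hbD := (hDiff b).mp (hdel b hba)
    obtain ⟨ja, hja, haje⟩ := List.mem_iff_getElem.mp haD
    obtain ⟨jb, hjb, hbje⟩ := List.mem_iff_getElem.mp hbD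
    -- identify the parents with path entries and use pairwise distinctness
    have hja1 : ja + 1 < p.length := by
      by_contra hja1
      have : ja = p.length - 1 := by omega
      subst this
      exact last_no_child N hℓ hp hu1 (by rw [haje]; exact haa)
    have hjb1 : jb + 1 < p.length := by
      by_contra hjb1
      have : jb = p.length - 1 := by omega
      subst this
      exact last_no_child N hℓ hp hu1 (by rw [hbje]; exact hba)
    have hcja : c ≠ p[ja+1]'hja1 := fun he => hcnD ((hDiff c).mpr (he ▸ List.getElem_mem _))
    have hcjb : c ≠ p[jb+1]'hjb1 := fun he => hcnD ((hDiff c).mpr (he ▸ List.getElem_mem _))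
    have hjab : ja ≠ jb := by
      intro he
      apply hab
      subst he
      rw [← haje, ← hbje]
    exact hp.1.2.2.2.2.2 ja jb hja1 hjb1 hjab c c
      (by rw [haje]; exact haa) hcja (by rw [hbje]; exact hba) hcjb rfl
  -- chains reach every elementary node from a kept node
  have hTR : ∀ c, Elem N.Arc (ExtDel N.Arc u1 p) c → ∃ a, Keep N.Arc (ExtDel N.Arc u1 p) a ∧
      ReflTransGen (EStep N (ExtDel N.Arc u1 p)) a c := by
    intro c
    induction c using (btc_wf_down N).induction with
    | _ c ih =>
      intro hc
      obtain ⟨d, hd⟩ := hpar_elem c hc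
      rcases notdel_split N (ExtDel N.Arc u1 p) hd.2.1 with hk | he
      · exact ⟨d, hk, ReflTransGen.single ⟨hd, hc⟩⟩
      · obtain ⟨a, ha, hchain⟩ := ih d (TransGen.single hd.1) he
        exact ⟨a, ha, hchain.tail ⟨hd, hc⟩⟩
  -- the root of N' would have an incoming reduced arc
  obtain ⟨rt', hrt', -⟩ := N'.uniqueRoot
  have hkrt : Keep N.Arc (ExtDel N.Arc u1 p) rt'.1 := rt'.2
  have hrtne : rt'.1 ≠ u1 := by
    intro he
    apply hkrt.1
    rw [he]
    exact hu1D
  have hne0 : indeg N.Arc rt'.1 ≠ 0 := fun hz => hrtne (hroot_eq _ hz)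
  have hex : ∃ d, N.Arc d rt'.1 := by
    by_contra hne
    push_neg at hne
    exact hne0 (card_zero_iff.mpr hne)
  obtain ⟨d, hd⟩ := hex
  have hdnD : ¬ (ExtDel N.Arc u1 p) d := by
    intro hdD
    obtain ⟨i, hi, hde⟩ := List.mem_iff_getElem.mp ((hDiff d).mp hdD)
    by_cases hi1 : i + 1 < p.length
    · rcases hvt4 i hi1 rt'.1 (by rw [hde]; exact hd) with he | he
      · exact hkrt.1 ((hDiff _).mpr (he ▸ List.getElem_mem _))
      · exact hkrt.2 (by rw [he]; exact helem_vt i hi1)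
    · have : i = p.length - 1 := by omega
      subst this
      exact last_no_child N hℓ hp hu1 (by rw [hde]; exact hd)
  rcases notdel_split N (ExtDel N.Arc u1 p) hdnD with hk | he
  · have := (hN' ⟨d, hk⟩ rt').mpr ⟨d, ReflTransGen.refl, hd, hdnD, hkrt.1⟩
    exact card_zero_iff.mp hrt' ⟨d, hk⟩ this
  · obtain ⟨a, ha, hchain⟩ := hTR d he
    have := (hN' ⟨a, ha⟩ rt').mpr ⟨d, hchain, hd, hdnD, hkrt.1⟩
    exact card_zero_iff.mp hrt' ⟨a, ha⟩ this

end RootCase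

/-- Let ℓ be a leaf with TH-path of length r in a network N with h hybrid
nodes. If ℓ is of type T (the parent of the first node u1 of the TH-path is a
tree node) then the reduction has h - (r - 1) hybrid nodes; if ℓ is of type H
(the parent of u1 is hybrid) then the reduction has h - r hybrid nodes. -/
theorem stmt19 {V : Type} [Finite V] (N : BTC V) (ℓ u1 : V) (p : List V)
    (hℓ : IsLeaf N.Arc ℓ) (hp : IsTHPath N.Arc ℓ p) (hu1 : p.head? = some u1)
    (h r : ℕ)
    (hh : h = Nat.card {v : V // IsHybrid N.Arc v})
    (hr : r = p.length)
    (N' : BTC {v : V // Keep N.Arc (ExtDel N.Arc u1 p) v})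
    (hN' : ∀ a b, N'.Arc a b ↔ RedArc N.Arc (ExtDel N.Arc u1 p) a b) :
    ((∀ w : V, N.Arc w u1 → IsTreeNode N.Arc w) →
      (Nat.card {v : {v : V // Keep N.Arc (ExtDel N.Arc u1 p) v} //
        IsHybrid N'.Arc v} : ℤ) = (h : ℤ) - ((r : ℤ) - 1)) ∧
    ((∃ w : V, N.Arc w u1 ∧ IsHybrid N.Arc w) →
      (Nat.card {v : {v : V // Keep N.Arc (ExtDel N.Arc u1 p) v} //
        IsHybrid N'.Arc v} : ℤ) = (h : ℤ) - (r : ℤ)) := by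
  have hEH := EH_main N hℓ hp hu1
  have hmc := master_count N (ExtDel N.Arc u1 p) N' hN' hEH
  have hlen := path_len_pos N hℓ hp hu1
  subst hh
  subst hr
  constructor
  · intro hT
    by_cases hpar : ∃ x, N.Arc x u1
    · obtain ⟨w, hw⟩ := hpar
      have hD := cardD_T N hℓ hp hu1 hT
      have hInc := cardInc_T N hℓ hp hu1 hT hw
      omega
    · exact (root_case N hℓ hp hu1 (fun x hx => hpar ⟨x, hx⟩) N' hN').elim
  · rintro ⟨g, hg1, hg2⟩
    have hD := cardD_H N hℓ hp hu1 hg1 hg2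
    have hInc := cardInc_H N hℓ hp hu1 hg1 hg2
    omega
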